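/- arXiv:1811.00856 — 3 statements merged into one kernel-verified Lean document; each statement's English description precedes it below -/
import Mathlib

section
/- Let s, k ≥ 2 be natural numbers and θ₁,…,θ_s ∈ (0,1). There exist constants c, c' > 0 (depending on s, k, θ) such that for arbitrarily large real τ, there is no solution in natural numbers x₁,…,x_s to |∑_{i=1}^s (x_i − θ_i)^k − τ| < η with 0 < η < c·τ^{1−2/k} and |x_i − (τ/s)^{1/k}| < c'·τ^{1/2k} for all i. -/
open Finset Real

private lemma int_dist_half (m M : ℕ) : (1:ℝ)/2 ≤ |(m:ℝ) - (M:ℝ) - 1/2| := by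
  rcases le_or_gt m M with h | h
  · have h' : (m:ℝ) ≤ M := by exact_mod_cast h
    exact le_abs.mpr (Or.inr (by linarith))
  · have h' : (M:ℝ) + 1 ≤ m := by exact_mod_cast h
    exact le_abs.mpr (Or.inl (by linarith))

private lemma pow_expand_bound (k : ℕ) (hk : 2 ≤ k) (μ u : ℝ) (hu : |u| ≤ μ) :
    |(μ + u)^k - μ^k - (k:ℝ) * μ^(k-1) * u| ≤ 2^k * μ^(k-2) * u^2 := by
  have hμ : 0 ≤ μ := le_trans (abs_nonneg u) hu
  have hexp : (μ + u)^k = ∑ j ∈ range (k+1), u^j * μ^(k-j) * (k.choose j : ℝ) := by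
    rw [add_comm, add_pow]
  have hsplit : ∑ j ∈ range (k+1), u^j * μ^(k-j) * (k.choose j : ℝ)
      = μ^k + (k:ℝ) * μ^(k-1) * u + ∑ j ∈ Ico 2 (k+1), u^j * μ^(k-j) * (k.choose j : ℝ) := by
    rw [range_eq_Ico, Finset.sum_eq_sum_Ico_succ_bot (by omega),
        Finset.sum_eq_sum_Ico_succ_bot (by omega)]
    simp only [pow_zero, pow_one, Nat.sub_zero, Nat.choose_zero_right,
      Nat.choose_one_right, Nat.cast_one, one_mul, mul_one, zero_add]
    ring
  have heq : (μ + u)^k - μ^k - (k:ℝ) * μ^(k-1) * u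
      = ∑ j ∈ Ico 2 (k+1), u^j * μ^(k-j) * (k.choose j : ℝ) := by
    rw [hexp, hsplit]; ring
  rw [heq]
  have hterm : ∀ j ∈ Ico 2 (k+1), |u^j * μ^(k-j) * (k.choose j : ℝ)|
      ≤ μ^(k-2) * u^2 * (k.choose j : ℝ) := by
    intro j hj
    simp only [Finset.mem_Ico] at hj
    have hj2 : 2 ≤ j := hj.1
    have hjk : j ≤ k := by omega
    rw [abs_mul, abs_mul, abs_pow, abs_pow, Nat.abs_cast, abs_of_nonneg hμ]
    have h1 : |u|^j ≤ u^2 * μ^(j-2) := by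
      have : |u|^j = |u|^2 * |u|^(j-2) := by rw [← pow_add]; congr 1; omega
      rw [this, sq_abs]
      gcongr
    calc |u|^j * μ^(k-j) * (k.choose j : ℝ)
        ≤ (u^2 * μ^(j-2)) * μ^(k-j) * (k.choose j : ℝ) := by
          gcongr
      _ = u^2 * (μ^(j-2) * μ^(k-j)) * (k.choose j : ℝ) := by ring
      _ = μ^(k-2) * u^2 * (k.choose j : ℝ) := by
          rw [← pow_add, show j-2+(k-j) = k-2 by omega]; ring
  calc |∑ j ∈ Ico 2 (k+1), u^j * μ^(k-j) * (k.choose j : ℝ)|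
      ≤ ∑ j ∈ Ico 2 (k+1), |u^j * μ^(k-j) * (k.choose j : ℝ)| := Finset.abs_sum_le_sum_abs _ _
    _ ≤ ∑ j ∈ Ico 2 (k+1), μ^(k-2) * u^2 * (k.choose j : ℝ) := Finset.sum_le_sum hterm
    _ = μ^(k-2) * u^2 * ((∑ j ∈ Ico 2 (k+1), k.choose j : ℕ) : ℝ) := by
        rw [← Finset.mul_sum]; push_cast; ring
    _ ≤ μ^(k-2) * u^2 * ((2:ℝ)^k) := by
        gcongr
        have hsub : ∑ j ∈ Ico 2 (k+1), k.choose j ≤ 2^k := by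
          rw [← Nat.sum_range_choose k]
          apply Finset.sum_le_sum_of_subset
          rw [range_eq_Ico]
          exact Finset.Ico_subset_Ico (by omega) le_rfl
        exact_mod_cast hsub
    _ = 2^k * μ^(k-2) * u^2 := by ring

set_option maxHeartbeats 1600000

theorem shifted_waring_nonrep (s k : ℕ) (hs : 2 ≤ s) (hk : 2 ≤ k)
    (θ : Fin s → ℝ) (hθ : ∀ i, θ i ∈ Set.Ioo (0:ℝ) 1) :
    ∃ c > (0:ℝ), ∃ c' > (0:ℝ), ∀ T : ℝ, ∃ τ : ℝ, T < τ ∧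
      ¬ ∃ (η : ℝ) (x : Fin s → ℕ), 0 < η ∧ η < c * τ ^ ((1:ℝ) - 2 / (k:ℝ)) ∧
        |(∑ i, ((x i : ℝ) - θ i) ^ k) - τ| < η ∧
        ∀ i, |(x i : ℝ) - (τ / (s:ℝ)) ^ ((1:ℝ) / (k:ℝ))| < c' * τ ^ ((1:ℝ) / (2 * (k:ℝ))) := by
  have hs0 : (0:ℝ) < s := by
    have : 0 < s := by omega
    exact_mod_cast this
  have hs1 : (1:ℝ) ≤ s := by
    have : 1 ≤ s := by omega
    exact_mod_cast this
  have hk0 : (0:ℝ) < k := by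
    have : 0 < k := by omega
    exact_mod_cast this
  have hkR : (2:ℝ) ≤ k := by exact_mod_cast hk
  have hkne : (k:ℝ) ≠ 0 := ne_of_gt hk0
  obtain ⟨Θ, hΘdef⟩ : ∃ y : ℝ, y = ∑ i, θ i := ⟨_, rfl⟩
  have hΘ0 : 0 ≤ Θ := by
    rw [hΘdef]; exact Finset.sum_nonneg fun i _ => (hθ i).1.le
  have hΘs : Θ ≤ s := by
    rw [hΘdef]
    calc ∑ i, θ i ≤ ∑ _i : Fin s, (1:ℝ) := Finset.sum_le_sum fun i _ => (hθ i).2.le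
      _ = s := by simp
  obtain ⟨c', hc'def⟩ : ∃ y : ℝ, y = 1/(8 * 2^(k+1) * (s:ℝ)^2) := ⟨_, rfl⟩
  have hc'pos : (0:ℝ) < c' := by rw [hc'def]; positivity
  refine ⟨1, one_pos, c', hc'pos, ?_⟩
  have hc'le : c' ≤ 1/2 := by
    have h2 : (2:ℝ) ≤ 2^(k+1) := by
      calc (2:ℝ) = 2^1 := (pow_one 2).symm
        _ ≤ 2^(k+1) := pow_le_pow_right₀ one_le_two (by omega)
    have hs2 : (1:ℝ) ≤ (s:ℝ)^2 := by
      have := pow_le_pow_left₀ zero_le_one hs1 2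
      rwa [one_pow] at this
    have h16 : (2:ℝ) ≤ 8 * 2^(k+1) * (s:ℝ)^2 := by
      have t2 : 8*2^(k+1) * 1 ≤ 8*2^(k+1)*(s:ℝ)^2 :=
        mul_le_mul_of_nonneg_left hs2 (by positivity)
      linarith
    rw [hc'def]
    exact one_div_le_one_div_of_le two_pos h16
  have hc'small : 2^(k+1) * (s:ℝ)^2 * c' = 1/8 := by
    rw [hc'def]; field_simp
  intro T
  obtain ⟨R, hRdef⟩ : ∃ y : ℝ, y = max T 0 + (s:ℝ) + 2 + 8*((s:ℝ) + 2^(k+1)*(s:ℝ)) := ⟨_, rfl⟩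
  obtain ⟨M, hM⟩ := exists_nat_ge ((s:ℝ) * R + (s:ℝ))
  obtain ⟨μ, hμdef⟩ : ∃ y : ℝ, y = ((M:ℝ) + 1/2 - Θ)/(s:ℝ) := ⟨_, rfl⟩
  have hpos8 : (0:ℝ) ≤ 8*((s:ℝ) + 2^(k+1)*(s:ℝ)) := by positivity
  have hμR : R ≤ μ := by
    rw [hμdef, le_div_iff₀ hs0]
    linarith [hM, hΘs]
  have hmax0 : (0:ℝ) ≤ max T 0 := le_max_right T 0
  have hμ2 : (2:ℝ) ≤ μ := by
    refine le_trans ?_ hμR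
    rw [hRdef]; linarith
  have hμ0 : (0:ℝ) < μ := lt_of_lt_of_le two_pos hμ2
  have hμnn : (0:ℝ) ≤ μ := hμ0.le
  have hμs : (s:ℝ) ≤ μ := by
    refine le_trans ?_ hμR
    rw [hRdef]; linarith
  have hμT : T < μ := by
    have h := le_max_left T 0
    refine lt_of_lt_of_le ?_ hμR
    rw [hRdef]; linarith
  have hμbig : 8*((s:ℝ) + 2^(k+1)*(s:ℝ)) ≤ μ := by
    refine le_trans ?_ hμR
    rw [hRdef]; linarith
  obtain ⟨τ, hτdef⟩ : ∃ y : ℝ, y = (s:ℝ) * μ^k := ⟨_, rfl⟩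
  have hτpos : 0 < τ := by rw [hτdef]; positivity
  have hTτ : T < τ := by
    have hμk : μ ≤ μ^k := le_self_pow₀ (by linarith) (by omega)
    have h1 : μ^k ≤ (s:ℝ) * μ^k := by
      have := mul_le_mul_of_nonneg_right hs1 (pow_nonneg hμnn k)
      rwa [one_mul] at this
    rw [hτdef]; linarith
  refine ⟨τ, hTτ, ?_⟩
  rintro ⟨η, x, hη0, hηc, hsum, hwin⟩
  have hpow1 : ((μ^k : ℝ)) ^ ((1:ℝ)/(k:ℝ)) = μ := by
    rw [← Real.rpow_natCast μ k, ← Real.rpow_mul hμnn]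
    rw [mul_one_div, div_self hkne, Real.rpow_one]
  have hτs : τ / (s:ℝ) = μ^k := by
    rw [hτdef]
    exact mul_div_cancel_left₀ _ (ne_of_gt hs0)
  have hcenter : (τ / (s:ℝ)) ^ ((1:ℝ)/(k:ℝ)) = μ := by rw [hτs, hpow1]
  have hwin' : ∀ i, |(x i:ℝ) - μ| < c' * τ ^ ((1:ℝ)/(2*(k:ℝ))) := by
    intro i; have := hwin i; rwa [hcenter] at this
  have h1k : τ ^ ((1:ℝ)/(k:ℝ)) ≤ (s:ℝ) * μ := by
    rw [hτdef, Real.mul_rpow hs0.le (by positivity), hpow1]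
    have hss : (s:ℝ) ^ ((1:ℝ)/(k:ℝ)) ≤ (s:ℝ) := by
      have h := Real.rpow_le_rpow_of_exponent_le hs1
        (show (1:ℝ)/(k:ℝ) ≤ 1 by rw [div_le_one hk0]; linarith)
      rwa [Real.rpow_one] at h
    exact mul_le_mul_of_nonneg_right hss hμnn
  have hsq : (τ ^ ((1:ℝ)/(2*(k:ℝ))))^2 = τ ^ ((1:ℝ)/(k:ℝ)) := by
    rw [← Real.rpow_natCast (τ ^ ((1:ℝ)/(2*(k:ℝ)))) 2, ← Real.rpow_mul hτpos.le]
    congr 1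
    push_cast
    field_simp
  have ht0 : 0 ≤ τ ^ ((1:ℝ)/(2*(k:ℝ))) := Real.rpow_nonneg hτpos.le _
  have hτ2k : τ ^ ((1:ℝ)/(2*(k:ℝ))) ≤ μ := by
    have h6 : (τ ^ ((1:ℝ)/(2*(k:ℝ))))^2 ≤ μ^2 := by
      rw [hsq]
      refine h1k.trans ?_
      have := mul_le_mul_of_nonneg_right hμs hμnn
      rwa [← sq] at this
    exact (pow_le_pow_iff_left₀ ht0 hμnn (by norm_num)).mp h6
  have hW : ∀ i, |(x i:ℝ) - θ i - μ| ≤ μ := by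
    intro i
    have h1 := hwin' i
    have hθi := hθ i
    have h2 : c' * τ ^ ((1:ℝ)/(2*(k:ℝ))) ≤ c' * μ :=
      mul_le_mul_of_nonneg_left hτ2k hc'pos.le
    have habs : |(x i:ℝ) - θ i - μ| ≤ |(x i:ℝ) - μ| + |θ i| := by
      have e : (x i:ℝ) - θ i - μ = ((x i:ℝ) - μ) + (-θ i) := by ring
      rw [e]
      exact (abs_add_le _ _).trans (by rw [abs_neg])
    have hθ1 : |θ i| ≤ 1 := by rw [abs_of_pos hθi.1]; exact hθi.2.le
    have h3 : c' * μ ≤ (1/2) * μ := mul_le_mul_of_nonneg_right hc'le hμnn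
    linarith [habs, h1.le, h2, hθ1, h3, hμ2]
  have hu2 : ∀ i, ((x i:ℝ) - θ i - μ)^2 ≤ 2*c'^2*((s:ℝ)*μ) + 2 := by
    intro i
    have h1 := hwin' i
    have hθi := hθ i
    have hθ1 : |θ i| ≤ 1 := by rw [abs_of_pos hθi.1]; exact hθi.2.le
    have habs : |(x i:ℝ) - θ i - μ| ≤ c' * τ ^ ((1:ℝ)/(2*(k:ℝ))) + 1 := by
      have e : (x i:ℝ) - θ i - μ = ((x i:ℝ) - μ) + (-θ i) := by ring
      calc |(x i:ℝ) - θ i - μ| ≤ |(x i:ℝ) - μ| + |θ i| := by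
            rw [e]; exact (abs_add_le _ _).trans (by rw [abs_neg])
        _ ≤ c' * τ ^ ((1:ℝ)/(2*(k:ℝ))) + 1 := by linarith [h1.le]
    have h3 : ((x i:ℝ) - θ i - μ)^2 ≤ (c' * τ ^ ((1:ℝ)/(2*(k:ℝ))) + 1)^2 := by
      rw [← sq_abs]
      exact pow_le_pow_left₀ (abs_nonneg _) habs 2
    have e6 : c'^2*(τ ^ ((1:ℝ)/(2*(k:ℝ))))^2 = c'^2*(τ ^ ((1:ℝ)/(k:ℝ))) := by rw [hsq]
    have h5 : c'^2 * (τ ^ ((1:ℝ)/(k:ℝ))) ≤ c'^2 * ((s:ℝ)*μ) :=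
      mul_le_mul_of_nonneg_left h1k (sq_nonneg c')
    have h7 : (0:ℝ) ≤ (c' * τ ^ ((1:ℝ)/(2*(k:ℝ))) - 1)^2 := sq_nonneg _
    linarith [h3, e6, h5, h7]
  have hkey : ∀ i, |((x i:ℝ) - θ i)^k - μ^k - (k:ℝ)*μ^(k-1)*((x i:ℝ) - θ i - μ)|
      ≤ 2^k * μ^(k-2) * ((x i:ℝ) - θ i - μ)^2 := by
    intro i
    have h := pow_expand_bound k hk μ ((x i:ℝ) - θ i - μ) (hW i)
    have heq : μ + ((x i:ℝ) - θ i - μ) = (x i:ℝ) - θ i := by ring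
    rwa [heq] at h
  obtain ⟨m, hmdef⟩ : ∃ n : ℕ, n = ∑ i, x i := ⟨_, rfl⟩
  have hUsum : ∑ i, ((x i:ℝ) - θ i - μ) = (m:ℝ) - Θ - (s:ℝ)*μ := by
    rw [hmdef, hΘdef]
    push_cast
    rw [Finset.sum_sub_distrib, Finset.sum_sub_distrib]
    simp [Finset.sum_const, Finset.card_univ]
  have hdiff : (∑ i, ((x i:ℝ) - θ i)^k) - τ - (k:ℝ)*μ^(k-1)*((m:ℝ) - Θ - (s:ℝ)*μ)
      = ∑ i, (((x i:ℝ) - θ i)^k - μ^k - (k:ℝ)*μ^(k-1)*((x i:ℝ) - θ i - μ)) := by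
    rw [Finset.sum_sub_distrib, Finset.sum_sub_distrib, ← Finset.mul_sum, hUsum]
    simp only [Finset.sum_const, Finset.card_univ, Fintype.card_fin, nsmul_eq_mul]
    rw [hτdef]
  have hbound : |∑ i, (((x i:ℝ) - θ i)^k - μ^k - (k:ℝ)*μ^(k-1)*((x i:ℝ) - θ i - μ))|
      ≤ (s:ℝ) * (2^k * μ^(k-2) * (2*c'^2*((s:ℝ)*μ) + 2)) := by
    calc |∑ i, (((x i:ℝ) - θ i)^k - μ^k - (k:ℝ)*μ^(k-1)*((x i:ℝ) - θ i - μ))|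
        ≤ ∑ i, |((x i:ℝ) - θ i)^k - μ^k - (k:ℝ)*μ^(k-1)*((x i:ℝ) - θ i - μ)| :=
          Finset.abs_sum_le_sum_abs _ _
      _ ≤ ∑ _i : Fin s, (2^k * μ^(k-2) * (2*c'^2*((s:ℝ)*μ) + 2)) := by
          apply Finset.sum_le_sum
          intro i _
          refine (hkey i).trans ?_
          have hp : (0:ℝ) ≤ 2^k * μ^(k-2) := by positivity
          exact mul_le_mul_of_nonneg_left (hu2 i) hp
      _ = (s:ℝ) * (2^k * μ^(k-2) * (2*c'^2*((s:ℝ)*μ) + 2)) := by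
          simp [Finset.sum_const, Finset.card_univ]
  have hτ12 : τ ^ ((1:ℝ) - 2/(k:ℝ)) ≤ (s:ℝ) * μ^(k-2) := by
    rw [hτdef, Real.mul_rpow hs0.le (by positivity)]
    have e1 : ((μ^k : ℝ)) ^ ((1:ℝ) - 2/(k:ℝ)) = μ^(k-2) := by
      rw [← Real.rpow_natCast μ k, ← Real.rpow_mul hμnn]
      rw [show (k:ℝ) * ((1:ℝ) - 2/(k:ℝ)) = ((k-2 : ℕ):ℝ) by
        rw [Nat.cast_sub hk]; push_cast; field_simp]
      exact Real.rpow_natCast μ (k-2)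
    rw [e1]
    have hss : (s:ℝ) ^ ((1:ℝ) - 2/(k:ℝ)) ≤ (s:ℝ) := by
      have h := Real.rpow_le_rpow_of_exponent_le hs1
        (show (1:ℝ) - 2/(k:ℝ) ≤ 1 by
          have : 0 ≤ 2/(k:ℝ) := by positivity
          linarith)
      rwa [Real.rpow_one] at h
    exact mul_le_mul_of_nonneg_right hss (pow_nonneg hμnn _)
  have hhalf : (1:ℝ)/2 ≤ |(m:ℝ) - Θ - (s:ℝ)*μ| := by
    have hsμ : (s:ℝ)*μ = (M:ℝ) + 1/2 - Θ := by
      rw [hμdef, mul_comm, div_mul_cancel₀ _ (ne_of_gt hs0)]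
    rw [show (m:ℝ) - Θ - (s:ℝ)*μ = (m:ℝ) - (M:ℝ) - 1/2 by rw [hsμ]; ring]
    exact int_dist_half m M
  have hμpow : (0:ℝ) < μ^(k-2) := pow_pos hμ0 _
  have hAU : μ^(k-1) ≤ |(k:ℝ)*μ^(k-1)*((m:ℝ) - Θ - (s:ℝ)*μ)| := by
    rw [abs_mul, abs_mul, Nat.abs_cast, abs_of_nonneg (pow_nonneg hμnn (k-1))]
    have h1 : (1:ℝ) ≤ (k:ℝ) * |(m:ℝ) - Θ - (s:ℝ)*μ| := by
      have a1 : 2*|(m:ℝ) - Θ - (s:ℝ)*μ| ≤ (k:ℝ)*|(m:ℝ) - Θ - (s:ℝ)*μ| :=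
        mul_le_mul_of_nonneg_right hkR (abs_nonneg _)
      linarith [hhalf, a1]
    calc μ^(k-1) = μ^(k-1) * 1 := (mul_one _).symm
      _ ≤ μ^(k-1) * ((k:ℝ) * |(m:ℝ) - Θ - (s:ℝ)*μ|) :=
          mul_le_mul_of_nonneg_left h1 (pow_nonneg hμnn (k-1))
      _ = (k:ℝ) * μ^(k-1) * |(m:ℝ) - Θ - (s:ℝ)*μ| := by ring
  have hfin : μ^(k-1) < (s:ℝ)*μ^(k-2) + (s:ℝ)*(2^k * μ^(k-2) * (2*c'^2*((s:ℝ)*μ) + 2)) := by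
    have htri : |(k:ℝ)*μ^(k-1)*((m:ℝ) - Θ - (s:ℝ)*μ)|
        ≤ |(∑ i, ((x i:ℝ) - θ i)^k) - τ|
          + |(∑ i, ((x i:ℝ) - θ i)^k) - τ - (k:ℝ)*μ^(k-1)*((m:ℝ) - Θ - (s:ℝ)*μ)| := by
      have h := _root_.abs_sub ((∑ i, ((x i:ℝ) - θ i)^k) - τ)
        (((∑ i, ((x i:ℝ) - θ i)^k) - τ) - (k:ℝ)*μ^(k-1)*((m:ℝ) - Θ - (s:ℝ)*μ))
      rwa [sub_sub_cancel] at h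
    rw [hdiff] at htri
    have h5 : |(∑ i, ((x i:ℝ) - θ i)^k) - τ| < (s:ℝ)*μ^(k-2) := by
      calc |(∑ i, ((x i:ℝ) - θ i)^k) - τ| < η := hsum
        _ < 1 * τ ^ ((1:ℝ) - 2/(k:ℝ)) := hηc
        _ ≤ (s:ℝ)*μ^(k-2) := by rw [one_mul]; exact hτ12
    calc μ^(k-1) ≤ |(k:ℝ)*μ^(k-1)*((m:ℝ) - Θ - (s:ℝ)*μ)| := hAU
      _ ≤ |(∑ i, ((x i:ℝ) - θ i)^k) - τ|
          + |∑ i, (((x i:ℝ) - θ i)^k - μ^k - (k:ℝ)*μ^(k-1)*((x i:ℝ) - θ i - μ))| := htri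
      _ < (s:ℝ)*μ^(k-2) + (s:ℝ)*(2^k * μ^(k-2) * (2*c'^2*((s:ℝ)*μ) + 2)) := by
          linarith [hbound, h5]
  have hμk1 : μ^(k-1) = μ^(k-2) * μ := by
    rw [← pow_succ]; congr 1; omega
  have hexpand : (s:ℝ)*(2^k * μ^(k-2) * (2*c'^2*((s:ℝ)*μ) + 2))
      = 2^(k+1)*(s:ℝ)^2*c'^2*(μ * μ^(k-2)) + 2^(k+1)*(s:ℝ)*μ^(k-2) := by
    rw [pow_succ]; ring
  have hc2 : 2^(k+1)*(s:ℝ)^2*c'^2 ≤ 1/16 := by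
    have e : 2^(k+1)*(s:ℝ)^2*c'^2 = (2^(k+1)*(s:ℝ)^2*c')*c' := by ring
    rw [e, hc'small]
    linarith [hc'le]
  have hquad : 2^(k+1)*(s:ℝ)^2*c'^2*(μ * μ^(k-2)) ≤ (1/16) * (μ * μ^(k-2)) :=
    mul_le_mul_of_nonneg_right hc2 (by positivity)
  have hX : 8*((s:ℝ) + 2^(k+1)*(s:ℝ)) * μ^(k-2) ≤ μ * μ^(k-2) :=
    mul_le_mul_of_nonneg_right hμbig hμpow.le
  have hXpos : (0:ℝ) < μ * μ^(k-2) := by positivity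
  rw [hμk1, hexpand] at hfin
  linarith [hfin, hquad, hX, hXpos]
end

section
/- Let s, k ≥ 2, θ₁,…,θ_s ∈ (0,1), and set τ_m = s·m^k + k·m^{k−1}(s − ∑θ_i). There exist constants c, c' > 0 such that for all sufficiently large m: if x₁,…,x_s ∈ ℕ satisfy |∑(x_i − θ_i)^k − τ_m| < η with 0 < η < c·τ_m^{1−2/k} and |x_i − (τ_m/s)^{1/k}| < c'·τ_m^{1/2k}, then writing a_i = x_i − m, one has ∑_{i=1}^s a_i = s. -/
set_option maxHeartbeats 2000000
open Finset Real

lemma sum_peel {M : Type*} [AddCommMonoid M] (n : ℕ) (f : ℕ → M) :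
    ∑ i ∈ Finset.range (n+2), f i = (∑ i ∈ Finset.range n, f (i+2)) + f 1 + f 0 := by
  rw [Finset.sum_range_succ', Finset.sum_range_succ']

lemma choose_tail_le (k' : ℕ) :
    ∑ i ∈ Finset.range (k'+1), (k'+2).choose (i+2) ≤ 2^(k'+2) := by
  have h := Nat.sum_range_choose (k'+2)
  calc ∑ i ∈ Finset.range (k'+1), (k'+2).choose (i+2)
      ≤ (∑ i ∈ Finset.range (k'+1), (k'+2).choose (i+2)) + (k'+2).choose 1 + (k'+2).choose 0 := by
        omega
    _ = ∑ i ∈ Finset.range (k'+3), (k'+2).choose i := by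
        rw [show k'+3 = (k'+1)+2 from rfl, sum_peel (k'+1) (fun i => (k'+2).choose i)]
    _ = 2^(k'+2) := h

lemma taylor_bound (k : ℕ) (hk : 2 ≤ k) (m t : ℝ) (hm : 0 ≤ m) (ht : |t| ≤ m) :
    |(m + t)^k - (m^k + k * m^(k-1) * t)| ≤ 2^k * t^2 * m^(k-2) := by
  obtain ⟨k', rfl⟩ : ∃ k', k = k' + 2 := ⟨k - 2, by omega⟩
  have expand : (m + t)^(k'+2)
      = ∑ i ∈ Finset.range (k'+3), t^i * m^(k'+2-i) * ((k'+2).choose i : ℝ) := by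
    rw [add_comm m t, add_pow]
  rw [expand, show k'+3 = (k'+1)+2 from rfl,
    sum_peel (k'+1) (fun i => t^i * m^(k'+2-i) * ((k'+2).choose i : ℝ))]
  have h1 : t^1 * m^(k'+2-1) * ((k'+2).choose 1 : ℝ) = ((k'+2 : ℕ) : ℝ) * m^(k'+2-1) * t := by
    simp [Nat.choose_one_right]; ring
  have h0 : t^0 * m^(k'+2-0) * ((k'+2).choose 0 : ℝ) = m^(k'+2) := by simp
  rw [h1, h0]
  have hcancel : (∑ i ∈ Finset.range (k'+1), t^(i+2) * m^(k'+2-(i+2)) * ((k'+2).choose (i+2) : ℝ))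
      + ((k'+2 : ℕ) : ℝ) * m^(k'+2-1) * t + m^(k'+2)
      - (m^(k'+2) + ((k'+2 : ℕ) : ℝ) * m^(k'+2-1) * t)
      = ∑ i ∈ Finset.range (k'+1), t^(i+2) * m^(k'+2-(i+2)) * ((k'+2).choose (i+2) : ℝ) := by
    ring
  rw [hcancel]
  have hstep : |(∑ i ∈ Finset.range (k'+1), t^(i+2) * m^(k'+2-(i+2)) * ((k'+2).choose (i+2) : ℝ))|
      ≤ ∑ i ∈ Finset.range (k'+1), t^2 * m^k' * ((k'+2).choose (i+2) : ℝ) := by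
    refine (Finset.abs_sum_le_sum_abs _ _).trans (Finset.sum_le_sum fun i hi => ?_)
    have hik : i ≤ k' := by simp at hi; omega
    have hsub : k'+2-(i+2) = k' - i := by omega
    rw [hsub, abs_mul, abs_mul, abs_pow,
      abs_of_nonneg (show (0:ℝ) ≤ ((k'+2).choose (i+2) : ℝ) by positivity),
      abs_of_nonneg (pow_nonneg hm _)]
    have h2 : |t|^(i+2) ≤ t^2 * m^i := by
      have he : |t|^(i+2) = t^2 * |t|^i := by rw [pow_add, sq_abs]; ring
      rw [he]
      have := pow_le_pow_left₀ (abs_nonneg t) ht i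
      nlinarith [sq_nonneg t]
    calc |t|^(i+2) * m^(k'-i) * ((k'+2).choose (i+2) : ℝ)
        ≤ (t^2 * m^i) * m^(k'-i) * ((k'+2).choose (i+2) : ℝ) := by
          gcongr
      _ = t^2 * m^k' * ((k'+2).choose (i+2) : ℝ) := by
          rw [mul_assoc (t^2) (m^i), ← pow_add, Nat.add_sub_cancel' hik]
  refine hstep.trans ?_
  rw [← Finset.mul_sum]
  have hC : (∑ i ∈ Finset.range (k'+1), ((k'+2).choose (i+2) : ℝ)) ≤ 2^(k'+2) := by
    have := choose_tail_le k'
    calc (∑ i ∈ Finset.range (k'+1), ((k'+2).choose (i+2) : ℝ))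
        = ((∑ i ∈ Finset.range (k'+1), (k'+2).choose (i+2) : ℕ) : ℝ) := by push_cast; rfl
      _ ≤ ((2^(k'+2) : ℕ) : ℝ) := by exact_mod_cast this
      _ = 2^(k'+2) := by push_cast; rfl
  have hkk : k'+2-2 = k' := by omega
  rw [hkk]
  calc t^2 * m^k' * (∑ i ∈ Finset.range (k'+1), ((k'+2).choose (i+2) : ℝ))
      ≤ t^2 * m^k' * 2^(k'+2) := by
        have : (0:ℝ) ≤ t^2 * m^k' := by positivity
        exact mul_le_mul_of_nonneg_left hC this
    _ = 2^(k'+2) * t^2 * m^k' := by ring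

lemma pow_add_one_lower (k : ℕ) (hk : 2 ≤ k) (m : ℝ) (hm : 0 ≤ m) :
    m^k + k * m^(k-1) ≤ (m+1)^k := by
  obtain ⟨k', rfl⟩ : ∃ k', k = k' + 2 := ⟨k - 2, by omega⟩
  have expand : (m + 1)^(k'+2)
      = ∑ i ∈ Finset.range (k'+3), (1:ℝ)^i * m^(k'+2-i) * ((k'+2).choose i : ℝ) := by
    rw [add_comm m 1, add_pow]
  rw [expand, show k'+3 = (k'+1)+2 from rfl,
    sum_peel (k'+1) (fun i => (1:ℝ)^i * m^(k'+2-i) * ((k'+2).choose i : ℝ))]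
  have h1 : (1:ℝ)^1 * m^(k'+2-1) * ((k'+2).choose 1 : ℝ) = ((k'+2 : ℕ) : ℝ) * m^(k'+2-1) := by
    simp [Nat.choose_one_right]; ring
  have h0 : (1:ℝ)^0 * m^(k'+2-0) * ((k'+2).choose 0 : ℝ) = m^(k'+2) := by simp
  rw [h1, h0]
  have hrem : (0:ℝ) ≤ ∑ i ∈ Finset.range (k'+1), (1:ℝ)^i * m^(k'+2-i) * ((k'+2).choose i : ℝ) := by
    apply Finset.sum_nonneg
    intro i _
    positivity
  have hrem2 : (0:ℝ) ≤ ∑ i ∈ Finset.range (k'+1), (1:ℝ)^(i+2) * m^(k'+2-(i+2)) * ((k'+2).choose (i+2) : ℝ) := by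
    apply Finset.sum_nonneg
    intro i _
    positivity
  linarith

theorem sum_ai_eq_s (s k : ℕ) (hs : 2 ≤ s) (hk : 2 ≤ k)
    (θ : Fin s → ℝ) (hθ : ∀ i, θ i ∈ Set.Ioo (0:ℝ) 1)
    (τ : ℕ → ℝ)
    (hτ : ∀ m : ℕ, τ m = (s:ℝ) * (m:ℝ) ^ k + (k:ℝ) * (m:ℝ) ^ (k - 1) * ((s:ℝ) - ∑ i, θ i)) :
    ∃ c > (0:ℝ), ∃ c' > (0:ℝ), ∃ M : ℕ, ∀ m : ℕ, M ≤ m →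
      ∀ (η : ℝ) (x : Fin s → ℕ),
        0 < η → η < c * (τ m) ^ ((1:ℝ) - 2 / (k:ℝ)) →
        |(∑ i, ((x i : ℝ) - θ i) ^ k) - τ m| < η →
        (∀ i, |(x i : ℝ) - (τ m / (s:ℝ)) ^ ((1:ℝ) / (k:ℝ))| < c' * (τ m) ^ ((1:ℝ) / (2 * (k:ℝ)))) →
        (∑ i, ((x i : ℤ) - (m:ℤ))) = (s:ℤ) := by
  have hs0 : (0:ℝ) < s := by positivity
  have hs2 : (2:ℝ) ≤ s := by exact_mod_cast hs
  have hk0 : (0:ℝ) < k := by positivity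
  have hkne : (k:ℝ) ≠ 0 := ne_of_gt hk0
  refine ⟨1, one_pos, 1 / (2^(k+3) * (s:ℝ)^2), by positivity, 2^(k+6)*s + 16*s + k + 4, ?_⟩
  intro m hm η x hη0 hηlt hsumx hxi
  set c' : ℝ := 1 / (2^(k+3) * (s:ℝ)^2) with hc'def
  set mr : ℝ := (m:ℝ) with hmrdef
  have hmM : ((2^(k+6)*s + 16*s + k + 4 : ℕ) : ℝ) ≤ mr := Nat.cast_le.2 hm
  have hmM' : 2^(k+6)*(s:ℝ) + 16*s + k + 4 ≤ mr := by push_cast at hmM; linarith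
  have h2k : (1:ℝ) ≤ 2^(k+6) := one_le_pow₀ (by norm_num)
  have hA1 : (0:ℝ) ≤ 2^(k+6)*(s:ℝ) := by positivity
  have hA2 : (0:ℝ) ≤ 16*(s:ℝ) := by positivity
  have hmr4 : (4:ℝ) ≤ mr := by linarith only [hmM', hA1, hA2, hk0.le]
  have hmr1 : (1:ℝ) ≤ mr := by linarith only [hmr4]
  have hmr0 : (0:ℝ) ≤ mr := by linarith only [hmr4]
  have hmrk : (k:ℝ) ≤ mr := by linarith only [hmM', hA1, hA2]
  -- θ sum bounds
  set T : ℝ := ∑ i, θ i with hTdef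
  clear_value T
  have hT0 : 0 ≤ T := by
    rw [hTdef]
    exact Finset.sum_nonneg fun i _ => le_of_lt (hθ i).1
  have hTs : T ≤ s := by
    rw [hTdef]
    calc (∑ i, θ i) ≤ ∑ _i : Fin s, (1:ℝ) := Finset.sum_le_sum fun i _ => le_of_lt (hθ i).2
      _ = s := by simp
  -- τ bounds
  have hpow_pos : (0:ℝ) < mr ^ (k-1) := pow_pos (by linarith) _
  have hpowk_pos : (0:ℝ) < mr ^ k := pow_pos (by linarith) _
  have hppos : (0:ℝ) < mr^(k-2) := pow_pos (by linarith) _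
  have hmrk_succ : mr ^ (k-1) * mr = mr ^ k := by
    rw [← pow_succ]; congr 1; omega
  have hτm : τ m = (s:ℝ) * mr ^ k + (k:ℝ) * mr ^ (k - 1) * ((s:ℝ) - T) := by
    rw [hmrdef]; exact hτ m
  have hτ_ge : (s:ℝ) * mr ^ k ≤ τ m := by
    rw [hτm]; linarith only [mul_nonneg (mul_nonneg hk0.le hpow_pos.le) (sub_nonneg.2 hTs)]
  have hτ_le : τ m ≤ 2 * s * mr ^ k := by
    rw [hτm]
    have h1 : (k:ℝ) * mr ^ (k-1) * ((s:ℝ) - T) ≤ (k:ℝ) * mr ^ (k-1) * s := by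
      apply mul_le_mul_of_nonneg_left (by linarith) (mul_nonneg hk0.le hpow_pos.le)
    have h2 : (k:ℝ) * mr ^ (k-1) * s ≤ mr * mr ^ (k-1) * s := by
      apply mul_le_mul_of_nonneg_right (mul_le_mul_of_nonneg_right hmrk hpow_pos.le) hs0.le
    have h3 : mr * mr ^ (k-1) * s = (s:ℝ) * mr^k := by rw [← hmrk_succ]; ring
    linarith only [h1, h2, h3]
  have hpowk1 : (1:ℝ) ≤ mr ^ k := one_le_pow₀ hmr1
  have hτ1 : (1:ℝ) ≤ τ m := by nlinarith only [hτ_ge, hpowk1, hs2]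
  have hτ0 : (0:ℝ) ≤ τ m := by linarith only [hτ1]
  have hc'pos : 0 < c' := by positivity
  clear_value c' mr
  -- rpow basics
  have hrpow_id : ∀ y : ℝ, 0 ≤ y → (y ^ k) ^ ((1:ℝ)/k) = y := by
    intro y hy
    rw [← Real.rpow_natCast y k, ← Real.rpow_mul hy, mul_one_div, div_self hkne, Real.rpow_one]
  -- root bounds
  set rt : ℝ := (τ m / (s:ℝ)) ^ ((1:ℝ)/(k:ℝ)) with hrtdef
  have hrt_low : mr ≤ rt := by
    have h1 : mr ^ k ≤ τ m / s := by
      rw [le_div_iff₀ hs0]; linarith only [hτ_ge]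
    calc mr = (mr ^ k) ^ ((1:ℝ)/k) := (hrpow_id mr hmr0).symm
      _ ≤ rt := Real.rpow_le_rpow hpowk_pos.le h1 (by positivity)
  have hrt_up : rt ≤ mr + 1 := by
    have hlower : mr^k + k * mr^(k-1) ≤ (mr+1)^k := pow_add_one_lower k hk mr hmr0
    have h1 : τ m / s ≤ (mr + 1) ^ k := by
      rw [div_le_iff₀ hs0]
      have : τ m ≤ (mr^k + k * mr^(k-1)) * s := by rw [hτm]; linarith only [mul_nonneg (mul_nonneg hk0.le hpow_pos.le) hT0]
      have h4 : (mr^k + (k:ℝ) * mr^(k-1)) * s ≤ (mr+1)^k * s :=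
        mul_le_mul_of_nonneg_right hlower hs0.le
      linarith only [this, h4]
    calc rt ≤ ((mr+1) ^ k) ^ ((1:ℝ)/k) :=
          Real.rpow_le_rpow (div_nonneg hτ0 hs0.le) h1 (by positivity)
      _ = mr + 1 := hrpow_id (mr+1) (by linarith)
  -- τ^(1/k) ≤ 2 s mr
  have hone_div_le : (1:ℝ)/k ≤ 1 := by
    rw [div_le_one hk0]; exact_mod_cast Nat.one_le_iff_ne_zero.2 (by omega)
  have h2s1 : (1:ℝ) ≤ 2*s := by linarith
  have hτ_k : (τ m) ^ ((1:ℝ)/k) ≤ 2 * s * mr := by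
    calc (τ m) ^ ((1:ℝ)/k) ≤ (2*s*mr^k) ^ ((1:ℝ)/k) :=
          Real.rpow_le_rpow hτ0 hτ_le (by positivity)
      _ = (2*(s:ℝ)) ^ ((1:ℝ)/k) * (mr^k) ^ ((1:ℝ)/k) := by
          rw [← Real.mul_rpow (by positivity) hpowk_pos.le]
      _ ≤ (2*s) * mr := by
          have ha : (2*(s:ℝ)) ^ ((1:ℝ)/k) ≤ 2*s := by
            calc (2*(s:ℝ)) ^ ((1:ℝ)/k) ≤ (2*(s:ℝ)) ^ (1:ℝ) :=
                  Real.rpow_le_rpow_of_exponent_le h2s1 hone_div_le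
              _ = 2*s := Real.rpow_one _
          rw [hrpow_id mr hmr0]
          exact mul_le_mul_of_nonneg_right ha hmr0
  -- τ^(1/(2k)) ≤ τ^(1/k)
  have hτ_2k_le : (τ m) ^ ((1:ℝ)/(2*(k:ℝ))) ≤ (τ m) ^ ((1:ℝ)/k) := by
    apply Real.rpow_le_rpow_of_exponent_le hτ1
    rw [div_le_div_iff₀ (by positivity) hk0]
    linarith only [hk0]
  have hτ_2k_sq : ((τ m) ^ ((1:ℝ)/(2*(k:ℝ))))^2 = (τ m) ^ ((1:ℝ)/k) := by
    rw [← Real.rpow_natCast ((τ m) ^ ((1:ℝ)/(2*(k:ℝ)))) 2, ← Real.rpow_mul hτ0]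
    congr 1
    push_cast
    field_simp
  have hτ_2k_pos : 0 ≤ (τ m) ^ ((1:ℝ)/(2*(k:ℝ))) := Real.rpow_nonneg hτ0 _
  -- t i bounds
  set t : Fin s → ℝ := fun i => (x i : ℝ) - mr - θ i with htdef
  clear_value t
  have hxb : ∀ i, |(x i : ℝ) - mr| < 1 + c' * (τ m) ^ ((1:ℝ)/(2*(k:ℝ))) := by
    intro i
    have h1 := hxi i
    have h2 : |(x i : ℝ) - mr| ≤ |(x i : ℝ) - rt| + |rt - mr| := by
      have : (x i : ℝ) - mr = ((x i : ℝ) - rt) + (rt - mr) := by ring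
      rw [this]; exact abs_add_le _ _
    have h3 : |rt - mr| ≤ 1 := by rw [abs_of_nonneg (by linarith)]; linarith
    linarith
  have htb : ∀ i, |t i| < 2 + c' * (τ m) ^ ((1:ℝ)/(2*(k:ℝ))) := by
    intro i
    have h1 := hxb i
    have h2 : |θ i| ≤ 1 := by
      rw [abs_of_nonneg (le_of_lt (hθ i).1)]; exact le_of_lt (hθ i).2
    have h3 : |t i| ≤ |(x i : ℝ) - mr| + |θ i| := by
      have : t i = ((x i : ℝ) - mr) + (-(θ i)) := by simp [htdef]; ring
      rw [this]
      exact (abs_add_le _ _).trans (by rw [abs_neg])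
    linarith
  have hc'2s : c' * (2 * s) ≤ 1/2 := by
    rw [hc'def]
    rw [div_mul_eq_mul_div, one_mul, div_le_div_iff₀ (by positivity) (by norm_num)]
    have h8 : (8:ℝ) ≤ 2^(k+3) := by
      calc (8:ℝ) = 2^3 := by norm_num
        _ ≤ 2^(k+3) := pow_le_pow_right₀ (by norm_num) (by omega)
    have h9 : 8*(s:ℝ)^2 ≤ 2^(k+3)*(s:ℝ)^2 := mul_le_mul_of_nonneg_right h8 (by positivity)
    have h10 : 2*(s:ℝ) ≤ (s:ℝ)^2 := by nlinarith only [hs2, hs0]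
    linarith only [h9, h10]
  have htmr : ∀ i, |t i| ≤ mr := by
    intro i
    have h1 := htb i
    have h2 : c' * (τ m) ^ ((1:ℝ)/(2*(k:ℝ))) ≤ c' * (2 * s * mr) :=
      mul_le_mul_of_nonneg_left (hτ_2k_le.trans hτ_k) hc'pos.le
    have h3 : c' * (2 * s * mr) = (c' * (2*s)) * mr := by ring
    have h4 : (c' * (2*s)) * mr ≤ (1/2) * mr := mul_le_mul_of_nonneg_right hc'2s hmr0
    linarith only [h1, h2, h3, h4, hmr4]
  have htsq : ∀ i, (t i)^2 ≤ 8 + 4 * s * c'^2 * mr := by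
    intro i
    have h1 := htb i
    have habs : 0 ≤ |t i| := abs_nonneg _
    have hsq : (t i)^2 = |t i|^2 := (sq_abs _).symm
    have h2 : |t i|^2 ≤ (2 + c' * (τ m) ^ ((1:ℝ)/(2*(k:ℝ))))^2 :=
      pow_le_pow_left₀ habs h1.le 2
    have h3 : (2 + c' * (τ m) ^ ((1:ℝ)/(2*(k:ℝ))))^2
        ≤ 8 + 2 * c'^2 * ((τ m) ^ ((1:ℝ)/(2*(k:ℝ))))^2 := by
      nlinarith only [sq_nonneg (c' * (τ m) ^ ((1:ℝ)/(2*(k:ℝ))) - 2)]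
    have h4 : 2 * c'^2 * ((τ m) ^ ((1:ℝ)/(2*(k:ℝ))))^2 ≤ 2 * c'^2 * (2 * s * mr) := by
      rw [hτ_2k_sq]
      exact mul_le_mul_of_nonneg_left hτ_k (by positivity)
    have h5 : (t i)^2 ≤ (2 + c' * (τ m) ^ ((1:ℝ)/(2*(k:ℝ))))^2 := by rw [hsq]; exact h2
    linarith only [h3, h4, h5]
  -- Taylor sum bound
  have hkey : ∀ i, |((x i : ℝ) - θ i)^k - (mr^k + k * mr^(k-1) * t i)|
      ≤ 2^k * (t i)^2 * mr^(k-2) := by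
    intro i
    have hx : (x i : ℝ) - θ i = mr + t i := by simp [htdef]; ring
    rw [hx]
    exact taylor_bound k hk mr (t i) hmr0 (htmr i)
  set A : ℤ := ∑ i, ((x i : ℤ) - (m:ℤ)) with hAdef
  have hAr : (A:ℝ) = (∑ i, (x i : ℝ)) - s * mr := by
    rw [hAdef, hmrdef]
    push_cast
    rw [Finset.sum_sub_distrib]
    simp [hmrdef, mul_comm]
  have hconst : (∑ _i : Fin s, mr) = (s:ℝ) * mr := by
    simp [Finset.sum_const, Finset.card_univ]
  have hsum_t : ∑ i, t i = (A:ℝ) - T := by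
    have e1 : ∑ i, t i = (∑ i, ((x i : ℝ) - mr)) - T := by
      simp only [htdef, hTdef]
      rw [← Finset.sum_sub_distrib]
    have e2 : (∑ i, ((x i : ℝ) - mr)) = (∑ i, (x i : ℝ)) - (∑ _i : Fin s, mr) :=
      Finset.sum_sub_distrib _ _
    rw [e1, e2, hconst, hAr]
  have hsplit : (∑ i, ((x i : ℝ) - θ i)^k) - ((s:ℝ)*mr^k + k*mr^(k-1)* ∑ i, t i)
      = ∑ i, (((x i : ℝ) - θ i)^k - (mr^k + k*mr^(k-1)* t i)) := by
    have e1 : ∑ i, (((x i : ℝ) - θ i)^k - (mr^k + k*mr^(k-1)* t i))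
        = (∑ i, ((x i : ℝ) - θ i)^k) - (∑ i : Fin s, (mr^k + k*mr^(k-1)* t i)) :=
      Finset.sum_sub_distrib _ _
    have e2 : (∑ i : Fin s, (mr^k + k*mr^(k-1)* t i))
        = (∑ _i : Fin s, mr^k) + ∑ i, k*mr^(k-1)* t i := Finset.sum_add_distrib
    have e3 : (∑ _i : Fin s, mr^k) = (s:ℝ) * mr^k := by
      simp [Finset.sum_const, Finset.card_univ]
    have e4 : (∑ i, k*mr^(k-1)* t i) = k*mr^(k-1) * ∑ i, t i := by
      rw [Finset.mul_sum]
    rw [e1, e2, e3, e4]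
  have hEbound : |(∑ i, ((x i : ℝ) - θ i)^k) - ((s:ℝ)*mr^k + k*mr^(k-1)* ∑ i, t i)|
      ≤ 2^k * (s * (8 + 4 * s * c'^2 * mr)) * mr^(k-2) := by
    rw [hsplit]
    refine (Finset.abs_sum_le_sum_abs _ _).trans ?_
    calc ∑ i, |((x i : ℝ) - θ i)^k - (mr^k + k*mr^(k-1)* t i)|
        ≤ ∑ i : Fin s, 2^k * (8 + 4 * s * c'^2 * mr) * mr^(k-2) := by
          refine Finset.sum_le_sum fun i _ => (hkey i).trans ?_
          exact mul_le_mul_of_nonneg_right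
            (mul_le_mul_of_nonneg_left (htsq i) (by positivity)) hppos.le
      _ = 2^k * (s * (8 + 4 * s * c'^2 * mr)) * mr^(k-2) := by
          rw [Finset.sum_const, Finset.card_univ]
          simp
          ring
  -- identity
  have hid : ((s:ℝ)*mr^k + k*mr^(k-1)* ∑ i, t i) - τ m = k*mr^(k-1)*((A:ℝ) - s) := by
    rw [hτm, hsum_t]; ring
  -- η bound
  have hη2 : η < 2 * s * mr^(k-2) := by
    have hexp0 : (0:ℝ) ≤ 1 - 2/k := by
      have : 2/(k:ℝ) ≤ 1 := by rw [div_le_one hk0]; exact_mod_cast hk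
      linarith
    have h1 : (τ m) ^ ((1:ℝ) - 2/k) ≤ (2*s*mr^k) ^ ((1:ℝ) - 2/k) :=
      Real.rpow_le_rpow hτ0 hτ_le hexp0
    have h2 : (2*(s:ℝ)*mr^k) ^ ((1:ℝ) - 2/k)
        = (2*(s:ℝ)) ^ ((1:ℝ) - 2/k) * (mr^k) ^ ((1:ℝ) - 2/k) := by
      rw [← Real.mul_rpow (by positivity) (by positivity)]
    have h3 : (2*(s:ℝ)) ^ ((1:ℝ) - 2/k) ≤ 2*s := by
      calc (2*(s:ℝ)) ^ ((1:ℝ) - 2/k) ≤ (2*(s:ℝ)) ^ (1:ℝ) := by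
            apply Real.rpow_le_rpow_of_exponent_le h2s1
            have : 0 < 2/(k:ℝ) := by positivity
            linarith
        _ = 2*s := Real.rpow_one _
    have h4 : ((mr:ℝ)^k) ^ ((1:ℝ) - 2/k) = mr ^ (k-2) := by
      rw [← Real.rpow_natCast mr k, ← Real.rpow_mul hmr0]
      have he : (k:ℝ) * ((1:ℝ) - 2/k) = ((k-2 : ℕ) : ℝ) := by
        rw [Nat.cast_sub hk]
        field_simp
        norm_num
      rw [he, Real.rpow_natCast]
    have h5 : (τ m) ^ ((1:ℝ)-2/k) ≤ 2*s*mr^(k-2) := by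
      refine h1.trans ?_
      rw [h2, h4]
      exact mul_le_mul_of_nonneg_right h3 hppos.le
    rw [one_mul] at hηlt
    linarith only [hηlt, h5]
  -- numeric scalar bounds
  have hmr_k1 : mr^(k-1) = mr^(k-2) * mr := by
    rw [← pow_succ]
    congr 1
    omega
  have hQ4 : (4:ℝ) ≤ 2^k := by
    calc (4:ℝ) = 2^2 := by norm_num
      _ ≤ 2^k := pow_le_pow_right₀ one_le_two hk
  have hQpos : (0:ℝ) < 2^k := by positivity
  have hQ6 : (2:ℝ)^(k+6) = 64 * 2^k := by rw [pow_add]; ring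
  have hQ3 : (2:ℝ)^(k+3) = 8 * 2^k := by rw [pow_add]; ring
  have hk2r : (2:ℝ) ≤ k := by exact_mod_cast hk
  have s1 : 8 * (2:ℝ)^k * s * 8 ≤ k * mr := by
    have hb : 2^(k+6)*(s:ℝ) ≤ mr := by linarith only [hmM', hA2, hk0.le]
    have hkmr : mr ≤ (k:ℝ) * mr := le_mul_of_one_le_left hmr0 (by linarith only [hk2r])
    rw [hQ6] at hb
    linarith only [hb, hkmr]
  have s2 : (2:ℝ)^k * 4 * s^2 * c'^2 * 8 ≤ k := by
    have hval : c' = 1/(8 * 2^k * (s:ℝ)^2) := by rw [hc'def, hQ3]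
    have h2kne : ((2:ℝ)^k) ≠ 0 := ne_of_gt hQpos
    have hsne : ((s:ℝ)) ≠ 0 := ne_of_gt hs0
    have heq : (2:ℝ)^k * 4 * s^2 * c'^2 * 8 = 1/(2*(2^k*(s:ℝ)^2)) := by
      rw [hval]
      field_simp
      ring
    rw [heq]
    have hs4 : (4:ℝ) ≤ (s:ℝ)^2 := by nlinarith only [hs2, hs0]
    have h1 : 1/(2*((2:ℝ)^k*(s:ℝ)^2)) ≤ 1 := by
      rw [div_le_one (by positivity)]
      nlinarith only [hQ4, hs4]
    linarith only [h1, hk2r]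
  -- combine
  have hEnum : 2^k * ((s:ℝ) * (8 + 4 * s * c'^2 * mr)) * mr^(k-2)
      ≤ ((k:ℝ)/4) * mr^(k-1) := by
    have t1 : 8 * (2:ℝ)^k * s * mr^(k-2) ≤ ((k:ℝ)/8) * (mr * mr^(k-2)) := by
      have hc1 : 8 * (2:ℝ)^k * s ≤ ((k:ℝ)/8) * mr := by linarith only [s1]
      have := mul_le_mul_of_nonneg_right hc1 hppos.le
      linarith only [this]
    have t2 : ((2:ℝ)^k * 4 * s^2 * c'^2) * (mr * mr^(k-2)) ≤ ((k:ℝ)/8) * (mr * mr^(k-2)) := by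
      have hc2 : (2:ℝ)^k * 4 * s^2 * c'^2 ≤ (k:ℝ)/8 := by linarith only [s2]
      have : (0:ℝ) ≤ mr * mr^(k-2) := mul_nonneg hmr0 hppos.le
      exact mul_le_mul_of_nonneg_right hc2 this
    have expand : 2^k * ((s:ℝ) * (8 + 4 * s * c'^2 * mr)) * mr^(k-2)
        = 8 * (2:ℝ)^k * s * mr^(k-2) + ((2:ℝ)^k * 4 * s^2 * c'^2) * (mr * mr^(k-2)) := by
      ring
    rw [expand, hmr_k1]
    have : ((k:ℝ)/4) * (mr^(k-2) * mr) = ((k:ℝ)/8) * (mr * mr^(k-2)) + ((k:ℝ)/8) * (mr * mr^(k-2)) := by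
      ring
    rw [this]
    linarith only [t1, t2]
  have hηnum : η < ((k:ℝ)/8) * mr^(k-1) := by
    have h2s : 2 * (s:ℝ) ≤ ((k:ℝ)/8) * mr := by
      have hx1 : 16*(s:ℝ) ≤ mr := by linarith only [hmM', hA1, hk0.le]
      have hx2 : (0:ℝ) ≤ ((k:ℝ)-2)*mr := mul_nonneg (by linarith only [hk2r]) hmr0
      linarith only [hx1, hx2, hs0]
    have hmul : 2 * (s:ℝ) * mr^(k-2) ≤ ((k:ℝ)/8) * mr * mr^(k-2) :=
      mul_le_mul_of_nonneg_right h2s hppos.le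
    rw [hmr_k1]
    linarith only [hη2, hmul]
  -- final combination
  have hfinal : |(k:ℝ)*mr^(k-1)*((A:ℝ) - s)| < ((k:ℝ)/2) * mr^(k-1) := by
    have hEq : (k:ℝ)*mr^(k-1)*((A:ℝ) - s)
        = (((s:ℝ)*mr^k + k*mr^(k-1)* ∑ i, t i) - (∑ i, ((x i : ℝ) - θ i)^k))
          + ((∑ i, ((x i : ℝ) - θ i)^k) - τ m) := by
      rw [← hid]; ring
    have habs : |(k:ℝ)*mr^(k-1)*((A:ℝ) - s)|
        ≤ |(∑ i, ((x i : ℝ) - θ i)^k) - ((s:ℝ)*mr^k + k*mr^(k-1)* ∑ i, t i)|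
          + |(∑ i, ((x i : ℝ) - θ i)^k) - τ m| := by
      rw [hEq]
      refine (abs_add_le _ _).trans ?_
      rw [abs_sub_comm]
    have hk4 : ((k:ℝ)/4) * mr^(k-1) + ((k:ℝ)/8) * mr^(k-1) < ((k:ℝ)/2) * mr^(k-1) := by
      have hp := hpow_pos
      have hkp : (0:ℝ) < (k:ℝ)/8 := by positivity
      nlinarith only [hp, hkp]
    calc |(k:ℝ)*mr^(k-1)*((A:ℝ) - s)|
        ≤ |(∑ i, ((x i : ℝ) - θ i)^k) - ((s:ℝ)*mr^k + k*mr^(k-1)* ∑ i, t i)|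
          + |(∑ i, ((x i : ℝ) - θ i)^k) - τ m| := habs
      _ < ((k:ℝ)/4) * mr^(k-1) + ((k:ℝ)/8) * mr^(k-1) := by
          have hx1 := hEbound.trans hEnum
          have hx2 := hsumx.trans hηnum
          linarith only [hx1, hx2, habs]
      _ < ((k:ℝ)/2) * mr^(k-1) := hk4
  have habs2 : |(A:ℝ) - s| < 1/2 := by
    have hpos : (0:ℝ) < (k:ℝ)*mr^(k-1) := mul_pos hk0 hpow_pos
    rw [abs_mul, abs_of_pos hpos] at hfinal
    by_contra hcon
    push_neg at hcon
    have h1 : (k:ℝ)*mr^(k-1) * (1/2) ≤ (k:ℝ)*mr^(k-1) * |(A:ℝ) - s| :=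
      mul_le_mul_of_nonneg_left hcon hpos.le
    linarith only [h1, hfinal]
  have hlt := abs_lt.mp habs2
  have h1 : ((A:ℤ):ℝ) < (((s:ℤ) + 1 : ℤ) : ℝ) := by push_cast; linarith only [hlt.2]
  have h2 : (((s:ℤ) - 1 : ℤ) : ℝ) < ((A:ℤ):ℝ) := by push_cast; linarith only [hlt.1]
  have h1' : A < (s:ℤ) + 1 := by exact_mod_cast h1
  have h2' : (s:ℤ) - 1 < A := by exact_mod_cast h2
  omega
end

section
/- Let s ≥ 2, k = 2, and θ₁,…,θ_s ∈ (0,1). There exist constants c, c' > 0 such that for all sufficiently large m ∈ ℕ, setting τ_m = s·m² + 2m(s − ∑θ_i), there is no solution in natural numbers x₁,…,x_s to |∑(x_i − θ_i)² − τ_m| < η with 0 < η < c and |x_i − (τ_m/s)^{1/2}| < c'·τ_m^{1/4} for all i. -/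
open Finset Real

set_option maxHeartbeats 1000000

lemma aux_int_sq (a : ℤ) (t : ℝ) (h0 : 0 < t) (h1 : t < 1) :
    (min t (1-t))^2 ≤ ((a:ℝ) - t)^2 := by
  have hmin0 : 0 ≤ min t (1-t) := le_min h0.le (by linarith)
  rcases le_or_gt a 0 with h | h
  · have ha : (a:ℝ) ≤ 0 := by exact_mod_cast h
    have h2 : min t (1-t) ≤ t - (a:ℝ) := by
      have := min_le_left t (1-t); linarith
    nlinarith
  · have ha : (1:ℝ) ≤ (a:ℝ) := by exact_mod_cast h
    have h2 : min t (1-t) ≤ (a:ℝ) - t := by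
      have := min_le_right t (1-t); linarith
    nlinarith

theorem shifted_waring_nonrep_k_eq_two (s : ℕ) (hs : 2 ≤ s)
    (θ : Fin s → ℝ) (hθ : ∀ i, θ i ∈ Set.Ioo (0:ℝ) 1) :
    ∃ c > (0:ℝ), ∃ c' > (0:ℝ), ∃ M : ℕ, ∀ m : ℕ, M ≤ m →
      ¬ ∃ (η : ℝ) (x : Fin s → ℕ),
        0 < η ∧ η < c ∧
        |(∑ i, ((x i : ℝ) - θ i) ^ 2) -
            ((s:ℝ) * (m:ℝ) ^ 2 + 2 * (m:ℝ) * ((s:ℝ) - ∑ i, θ i))| < η ∧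
        ∀ i, |(x i : ℝ) -
            (((s:ℝ) * (m:ℝ) ^ 2 + 2 * (m:ℝ) * ((s:ℝ) - ∑ i, θ i)) / (s:ℝ)) ^ ((1:ℝ) / 2)| <
          c' * ((s:ℝ) * (m:ℝ) ^ 2 + 2 * (m:ℝ) * ((s:ℝ) - ∑ i, θ i)) ^ ((1:ℝ) / 4) := by
  have hne : (Finset.univ : Finset (Fin s)).Nonempty := ⟨⟨0, by omega⟩, mem_univ _⟩
  have hs0 : (0:ℝ) < (s:ℝ) := by exact_mod_cast (by omega : 0 < s)
  have hs2 : (2:ℝ) ≤ (s:ℝ) := by exact_mod_cast hs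
  set c : ℝ := univ.inf' hne (fun i => (min (θ i) (1 - θ i)) ^ 2) with hc
  have hcpos : 0 < c := by
    rw [hc, Finset.lt_inf'_iff]
    intro i _
    have h1 := (hθ i).1; have h2 := (hθ i).2
    have : 0 < min (θ i) (1 - θ i) := lt_min h1 (by linarith)
    positivity
  have hcle : ∀ i : Fin s, c ≤ (min (θ i) (1 - θ i)) ^ 2 :=
    fun i => Finset.inf'_le _ (mem_univ i)
  have hclt1 : c < 1 := by
    obtain ⟨i, _⟩ := hne
    refine lt_of_le_of_lt (hcle i) ?_
    have h1 := (hθ i).1; have h2 := (hθ i).2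
    have hm0 : 0 < min (θ i) (1 - θ i) := lt_min h1 (by linarith)
    have hm1 : min (θ i) (1 - θ i) ≤ θ i := min_le_left _ _
    nlinarith
  refine ⟨c, hcpos, 1/(2*(s:ℝ)), by positivity, 16*s, ?_⟩
  intro m hm
  rintro ⟨η, x, hη0, hηc, hsum, hclose⟩
  have hm32 : 32 ≤ m := by omega
  have hmr : (32:ℝ) ≤ (m:ℝ) := by exact_mod_cast hm32
  have hms : 16*(s:ℝ) ≤ (m:ℝ) := by exact_mod_cast hm
  set S := ∑ i, θ i with hS
  have hS0 : 0 < S := Finset.sum_pos (fun i _ => (hθ i).1) hne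
  have hSs : S < (s:ℝ) := by
    have h := Finset.sum_lt_sum_of_nonempty hne (fun i _ => (hθ i).2)
    simpa [hS] using h
  set τ : ℝ := (s:ℝ) * (m:ℝ)^2 + 2*(m:ℝ)*((s:ℝ) - S) with hτ
  have hτpos : 0 < τ := by rw [hτ]; nlinarith
  have hτub : τ ≤ ((s:ℝ)*(m:ℝ))^2 := by
    have h1 : 2*(m:ℝ)*((s:ℝ)-S) ≤ 2*(m:ℝ)*(s:ℝ) := by nlinarith
    have h2 : 2*(m:ℝ)*(s:ℝ) ≤ (m:ℝ)^2*(s:ℝ) := by nlinarith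
    have h3 : (s:ℝ)*(m:ℝ)^2 + (m:ℝ)^2*(s:ℝ) ≤ ((s:ℝ)*(m:ℝ))^2 := by nlinarith [sq_nonneg (m:ℝ)]
    rw [hτ]; linarith
  -- bounds on r = (τ/s)^(1/2)
  set r : ℝ := (τ / (s:ℝ)) ^ ((1:ℝ)/2) with hr
  have hrs : r = Real.sqrt (τ / s) := by rw [hr, Real.sqrt_eq_rpow]
  have hr1 : (m:ℝ) < r := by
    rw [hrs, show (m:ℝ) = Real.sqrt ((m:ℝ)^2) from (Real.sqrt_sq (by positivity)).symm]
    apply Real.sqrt_lt_sqrt (by positivity)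
    rw [lt_div_iff₀ hs0]; rw [hτ]; nlinarith
  have hr2 : r < (m:ℝ) + 1 := by
    rw [hrs]
    rw [show ((m:ℝ)+1) = Real.sqrt (((m:ℝ)+1)^2) from (Real.sqrt_sq (by positivity)).symm]
    apply Real.sqrt_lt_sqrt (by positivity)
    rw [div_lt_iff₀ hs0]; rw [hτ]; nlinarith
  -- bound on t = τ^(1/4)
  set t : ℝ := τ ^ ((1:ℝ)/4) with ht
  have ht0 : 0 ≤ t := Real.rpow_nonneg hτpos.le _
  have htsq : t^2 = Real.sqrt τ := by
    rw [ht, ← Real.rpow_natCast (τ ^ ((1:ℝ)/4)) 2, ← Real.rpow_mul hτpos.le,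
      Real.sqrt_eq_rpow]
    norm_num
  have hsqrt : Real.sqrt τ ≤ (s:ℝ)*(m:ℝ) := by
    calc Real.sqrt τ ≤ Real.sqrt (((s:ℝ)*(m:ℝ))^2) := Real.sqrt_le_sqrt hτub
    _ = (s:ℝ)*(m:ℝ) := Real.sqrt_sq (by positivity)
  -- integer shifts
  set a : Fin s → ℤ := fun i => (x i : ℤ) - (m:ℤ) with ha
  have hx : ∀ i, (x i : ℝ) = (m:ℝ) + ((a i : ℤ) : ℝ) := by
    intro i; simp only [ha]; push_cast; ring
  clear_value c S τ r t a
  have habs : ∀ i, |((a i : ℤ):ℝ) - θ i| ≤ 1/(2*(s:ℝ)) * t + 2 := by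
    intro i
    have hci := hclose i
    rw [abs_lt] at hci
    have hxa := hx i
    have hθ1 := (hθ i).1; have hθ2 := (hθ i).2
    rw [abs_le]
    constructor <;> [linarith [hci.1, hci.2, hr1, hr2]; linarith [hci.1, hci.2, hr1, hr2]]
  have hterm : ∀ i, (((a i : ℤ):ℝ) - θ i)^2 ≤ 2*(1/(2*(s:ℝ)) * t)^2 + 8 := by
    intro i
    have h := habs i
    have h0 : 0 ≤ |((a i : ℤ):ℝ) - θ i| := abs_nonneg _
    have h1 : (((a i : ℤ):ℝ) - θ i)^2 = |((a i : ℤ):ℝ) - θ i|^2 := (sq_abs _).symm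
    have h2 : (((a i : ℤ):ℝ) - θ i)^2 ≤ (1/(2*(s:ℝ)) * t + 2)^2 := by
      rw [h1]; exact pow_le_pow_left₀ h0 h 2
    have h3 : (1/(2*(s:ℝ)) * t + 2)^2 ≤ 2*(1/(2*(s:ℝ)) * t)^2 + 8 := by
      nlinarith [sq_nonneg (1/(2*(s:ℝ)) * t - 2)]
    linarith [h2, h3]
  have hQbound : (∑ i, (((a i : ℤ):ℝ) - θ i)^2) ≤ (m:ℝ)/2 + 8*(s:ℝ) := by
    have h1 : (∑ i, (((a i : ℤ):ℝ) - θ i)^2) ≤ ∑ _i : Fin s, (2*(1/(2*(s:ℝ)) * t)^2 + 8) :=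
      Finset.sum_le_sum (fun i _ => hterm i)
    have h2 : (∑ _i : Fin s, (2*(1/(2*(s:ℝ)) * t)^2 + 8)) = (s:ℝ) * (2*(1/(2*(s:ℝ)) * t)^2 + 8) := by
      rw [Finset.sum_const, Finset.card_univ, Fintype.card_fin, nsmul_eq_mul]
    have h3 : (s:ℝ) * (2*(1/(2*(s:ℝ)) * t)^2 + 8) = t^2/(2*(s:ℝ)) + 8*(s:ℝ) := by
      field_simp
    have h4 : t^2/(2*(s:ℝ)) ≤ (m:ℝ)/2 := by
      rw [htsq, div_le_div_iff₀ (by positivity) (by norm_num)]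
      linarith [hsqrt]
    linarith
  have hQ0 : (0:ℝ) ≤ ∑ i, (((a i : ℤ):ℝ) - θ i)^2 :=
    Finset.sum_nonneg (fun i _ => sq_nonneg _)
  -- key identity
  have key : (∑ i, ((x i:ℝ) - θ i)^2) - τ
      = 2*(m:ℝ)*((∑ i, ((a i : ℤ):ℝ)) - (s:ℝ)) + ∑ i, (((a i : ℤ):ℝ) - θ i)^2 := by
    have e1 : ∀ i ∈ univ, ((x i:ℝ) - θ i)^2
        = (m:ℝ)^2 + 2*(m:ℝ)*(((a i : ℤ):ℝ) - θ i) + (((a i : ℤ):ℝ) - θ i)^2 := by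
      intro i _; rw [hx i]; ring
    rw [Finset.sum_congr rfl e1]
    rw [Finset.sum_add_distrib, Finset.sum_add_distrib, ← Finset.mul_sum,
      Finset.sum_sub_distrib]
    simp only [Finset.sum_const, Finset.card_univ, Fintype.card_fin, nsmul_eq_mul]
    rw [hτ, ← hS]
    ring
  set n : ℤ := ∑ i, a i with hn
  clear_value n
  have hncast : (∑ i, ((a i : ℤ):ℝ)) = (n:ℝ) := by rw [hn]; push_cast; ring
  rw [hncast] at key
  rw [abs_lt] at hsum
  rcases lt_trichotomy n (s:ℤ) with h | h | h
  · -- n < s : D ≤ -2m + Q ≤ -3m/2 + 8s ≤ -1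
    have hnr : (n:ℝ) ≤ (s:ℝ) - 1 := by
      have : (n:ℝ) ≤ (s:ℤ) - 1 := by exact_mod_cast Int.le_sub_one_of_lt h
      push_cast at this; linarith
    have h5 : 0 ≤ (m:ℝ) * ((s:ℝ) - 1 - (n:ℝ)) := mul_nonneg (by positivity) (by linarith)
    have hD : (∑ i, ((x i:ℝ) - θ i)^2) - τ ≤ -1 := by
      rw [key]; nlinarith [h5, hQbound, hms, hmr]
    linarith [hsum.1]
  · -- n = s : D = Q ≥ c
    obtain ⟨i0, _⟩ := hne
    have hnr : (n:ℝ) = (s:ℝ) := by exact_mod_cast h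
    have hsingle : (((a i0 : ℤ):ℝ) - θ i0)^2 ≤ ∑ i, (((a i : ℤ):ℝ) - θ i)^2 :=
      Finset.single_le_sum (f := fun i => (((a i : ℤ):ℝ) - θ i)^2)
        (fun i _ => sq_nonneg _) (mem_univ i0)
    have hci0 : c ≤ (((a i0 : ℤ):ℝ) - θ i0)^2 :=
      le_trans (hcle i0) (aux_int_sq (a i0) (θ i0) (hθ i0).1 (hθ i0).2)
    have hD : c ≤ (∑ i, ((x i:ℝ) - θ i)^2) - τ := by
      rw [key, hnr]; nlinarith [hsingle, hci0]
    linarith [hsum.2]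
  · -- n > s : D ≥ 2m
    have hnr : (s:ℝ) + 1 ≤ (n:ℝ) := by
      have : (s:ℤ) + 1 ≤ n := by omega
      exact_mod_cast this
    have h5 : 0 ≤ (m:ℝ) * ((n:ℝ) - (s:ℝ) - 1) := mul_nonneg (by positivity) (by linarith)
    have hD : (1:ℝ) ≤ (∑ i, ((x i:ℝ) - θ i)^2) - τ := by
      rw [key]; nlinarith [h5, hQ0, hmr]
    linarith [hsum.2]
end
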